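/- arXiv:0812.3310 — 2 statements merged into one kernel-verified Lean document; each statement's English description precedes it below -/
import Mathlib

section
/- If a traceless complex 3×3 matrix W satisfies the quadratic equation W² - (b/a)·W - (a/3)·I = 0, where a = Tr(W²) ≠ 0 and b = Tr(W³), then 6b² = a³. -/
/-! Compute tr(W⁴) in two ways. Squaring the quadratic relation W² = (b/a) W + (a/3) I gives
tr(W⁴) = (b/a)² a + a²/3, using tr W = 0. On the other hand, for a traceless 3 × 3 matrix the
Newton identities (equivalently Cayley–Hamilton, W³ = (a/2) W + (det W) I) give tr(W⁴) = a²/2.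
Equating, b²/a = a²/6. -/

namespace Matrix

theorem two_mul_trace_pow_four_of_trace_eq_zero {R : Type*} [CommRing R]
    {M : Matrix (Fin 3) (Fin 3) R} (h : M.trace = 0) :
    2 * (M ^ 4).trace = (M ^ 2).trace ^ 2 := by
  simp only [trace_fin_three, pow_succ, pow_zero, one_mul, mul_apply, Fin.sum_univ_three] at h ⊢
  rw [show M 2 2 = -M 0 0 - M 1 1 by linear_combination h]
  ring

theorem trace_pow_four_of_sq_eq {n R : Type*} [Fintype n] [DecidableEq n] [CommRing R]
    {W : Matrix n n R} {c d : R} (h : W ^ 2 = c • W + d • 1) :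
    (W ^ 4).trace = c ^ 2 * (W ^ 2).trace + 2 * c * d * W.trace + d ^ 2 * Fintype.card n := by
  have hW4 : W ^ 4 = c ^ 2 • W ^ 2 + (2 * c * d) • W + d ^ 2 • (1 : Matrix n n R) :=
    calc W ^ 4 = (c • W + d • 1) * (c • W + d • 1) := by rw [← h, ← sq, ← pow_mul]
      _ = c ^ 2 • (W * W) + (2 * c * d) • W + d ^ 2 • 1 := by
        simp only [add_mul, mul_add, smul_mul_smul_comm, Matrix.mul_one, Matrix.one_mul]
        module
      _ = _ := by rw [← sq]
  simp [hW4, trace_add, trace_smul, trace_one]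

end Matrix

theorem stmt1_general (W : Matrix (Fin 3) (Fin 3) ℂ) (htr : W.trace = 0)
    (a b : ℂ) (ha : a = (W ^ 2).trace) (ha0 : a ≠ 0)
    (heq : W ^ 2 - (b / a) • W - (a / 3) • (1 : Matrix (Fin 3) (Fin 3) ℂ) = 0) :
    6 * b ^ 2 = a ^ 3 := by
  have hW2 : W ^ 2 = (b / a) • W + (a / 3) • 1 := by
    rw [← sub_eq_zero, ← heq, sub_sub]
  have htr4 := Matrix.two_mul_trace_pow_four_of_trace_eq_zero htr
  rw [Matrix.trace_pow_four_of_sq_eq hW2, htr, ← ha] at htr4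
  norm_num at htr4
  field_simp at htr4
  linear_combination htr4

theorem stmt1 (W : Matrix (Fin 3) (Fin 3) ℂ) (htr : W.trace = 0)
    (a b : ℂ) (ha : a = (W ^ 2).trace) (hb : b = (W ^ 3).trace) (ha0 : a ≠ 0)
    (heq : W ^ 2 - (b / a) • W - (a / 3) • (1 : Matrix (Fin 3) (Fin 3) ℂ) = 0) :
    6 * b ^ 2 = a ^ 3 :=
  stmt1_general W htr a b ha ha0 heq
end

section
/- In the Kerr-NUT coordinates, with u = (2/(x²+y²)²)·(X(dt - y²dz) - Y(dt + x²dz)) and metric g given by the Kerr-NUT line element, the squared norm of u is u² = 4(X - Y)/(x² + y²)³. In particular δU = y·u has (δU)² = 4y²(X - Y)/(x² + y²)³, and with X - Y = -ε(x² + y²) + 2νx + 2μy, σ := 2α/(3λ²-1) - (1/4)(δU)² evaluates (when ν = 0) to εy²/(x² + y²)². -/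
/-- Kerr-NUT metric components in coordinates (t, y, x, z), where
`X = -εx² + 2νx + γ` and `Y = εy² - 2μy + γ`. -/
noncomputable def kerrNUTMetric (x y X Y : ℝ) : Matrix (Fin 4) (Fin 4) ℝ :=
  let Δ : ℝ := y ^ 2 + x ^ 2
  Matrix.of
    ![![(X - Y) / Δ, 0, 0, (-(Y * x ^ 2) - X * y ^ 2) / Δ],
      ![0, Δ / Y, 0, 0],
      ![0, 0, Δ / X, 0],
      ![(-(Y * x ^ 2) - X * y ^ 2) / Δ, 0, 0, (X * y ^ 4 - Y * x ^ 4) / Δ]]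

/-- Components of the 1-form `u = (2/(x²+y²)²)(X(dt - y²dz) - Y(dt + x²dz))`. -/
noncomputable def kerrNUTu (x y X Y : ℝ) : Fin 4 → ℝ :=
  ![2 * (X - Y) / (y ^ 2 + x ^ 2) ^ 2, 0, 0,
    2 * (-(X * y ^ 2) - Y * x ^ 2) / (y ^ 2 + x ^ 2) ^ 2]

/-! The metric is block diagonal with a `(t, z)` block of determinant `-XY`, so it is inverted
by hand and `g⁻¹(u, u)` becomes a rational identity in `x, y, X, Y`. For `α`, write
`(y + ix)³ = (y³ - 3yx²) + i(3y²x - x³)`, whose norm squared is `(x² + y²)³`; when `ν = 0`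
this gives `2α / (3λ² - 1) = 2μy³ / (x² + y²)³`, which cancels the `μ`-term of
`y² g⁻¹(u, u) / 4`, since `X - Y = -ε(x² + y²) + 2μy`. -/

open Complex Matrix

-- The `(t, z)` block is the adjugate of the metric's `(t, z)` block divided by its determinant `-XY`.
noncomputable def kerrNUTMetricInv (x y X Y : ℝ) : Matrix (Fin 4) (Fin 4) ℝ :=
  let Δ : ℝ := y ^ 2 + x ^ 2
  Matrix.of
    ![![(X * y ^ 4 - Y * x ^ 4) / (-(X * Y) * Δ), 0, 0, (Y * x ^ 2 + X * y ^ 2) / (-(X * Y) * Δ)],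
      ![0, Y / Δ, 0, 0],
      ![0, 0, X / Δ, 0],
      ![(Y * x ^ 2 + X * y ^ 2) / (-(X * Y) * Δ), 0, 0, (X - Y) / (-(X * Y) * Δ)]]

section Metric

variable {x y X Y : ℝ}

theorem kerrNUTMetric_mul_kerrNUTMetricInv (hX : X ≠ 0) (hY : Y ≠ 0) (hΔ : y ^ 2 + x ^ 2 ≠ 0) :
    kerrNUTMetric x y X Y * kerrNUTMetricInv x y X Y = 1 := by
  ext i j
  fin_cases i <;> fin_cases j <;>
    simp [kerrNUTMetric, kerrNUTMetricInv, mul_apply, Fin.sum_univ_four] <;>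
    field_simp <;> ring

theorem kerrNUTMetric_inv (hX : X ≠ 0) (hY : Y ≠ 0) (hΔ : y ^ 2 + x ^ 2 ≠ 0) :
    (kerrNUTMetric x y X Y)⁻¹ = kerrNUTMetricInv x y X Y :=
  inv_eq_right_inv (kerrNUTMetric_mul_kerrNUTMetricInv hX hY hΔ)

theorem kerrNUTu_normSq (hX : X ≠ 0) (hY : Y ≠ 0) (hΔ : y ^ 2 + x ^ 2 ≠ 0) :
    (kerrNUTMetric x y X Y)⁻¹ *ᵥ kerrNUTu x y X Y ⬝ᵥ kerrNUTu x y X Y =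
      4 * (X - Y) / (x ^ 2 + y ^ 2) ^ 3 := by
  rw [kerrNUTMetric_inv hX hY hΔ, add_comm (x ^ 2)]
  simp only [dotProduct, mulVec, kerrNUTMetricInv, kerrNUTu, of_apply, cons_val', cons_val_fin_one,
    Fin.sum_univ_four, Fin.isValue, cons_val_zero, cons_val_one, cons_val, mul_zero, zero_mul, add_zero]
  field_simp
  ring

end Metric

theorem re_neg_div_add_I_mul_pow_three (μ ν x y : ℝ) :
    (-((μ : ℂ) + I * ν) / ((y : ℂ) + I * x) ^ 3).re =
      -(μ * (y ^ 3 - 3 * y * x ^ 2) + ν * (3 * y ^ 2 * x - x ^ 3)) / (y ^ 2 + x ^ 2) ^ 3 := by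
  have hcube : ((y : ℂ) + I * x) ^ 3 = ⟨y ^ 3 - 3 * y * x ^ 2, 3 * y ^ 2 * x - x ^ 3⟩ := by
    apply Complex.ext <;>
      simp only [pow_succ, pow_zero, one_mul, mul_re, mul_im, add_re, add_im, I_re, I_im, ofReal_re,
        ofReal_im] <;>
      ring
  have hnormSq : normSq ((y : ℂ) + I * x) = y ^ 2 + x ^ 2 := by
    simp only [normSq_apply, add_re, add_im, mul_re, mul_im, I_re, I_im, ofReal_re, ofReal_im]
    ring
  rw [div_re, map_pow, hnormSq, hcube]
  simp only [neg_re, neg_im, add_re, add_im, mul_re, mul_im, I_re, I_im, ofReal_re, ofReal_im]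
  ring

theorem pow_three_sub_div_three_mul_div_sq_sub_one {x y : ℝ} (hy : y ≠ 0)
    (h3 : 3 * x ^ 2 ≠ y ^ 2) :
    (y ^ 3 - 3 * y * x ^ 2) / (3 * (x / y) ^ 2 - 1) = -y ^ 3 := by
  have h3' : 3 * x ^ 2 - y ^ 2 ≠ 0 := sub_ne_zero.mpr h3
  have hden : 3 * (x / y) ^ 2 - 1 = (3 * x ^ 2 - y ^ 2) / y ^ 2 := by field_simp
  rw [hden, div_div_eq_mul_div, div_eq_iff h3']
  ring

theorem stmt18_general (y x ε ν γ μ : ℝ) (X Y : ℝ)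
    (hX : X = -ε * x ^ 2 + 2 * ν * x + γ) (hY : Y = ε * y ^ 2 - 2 * μ * y + γ)
    (hXpos : X > 0) (hY0 : Y ≠ 0) (hΔ : x ^ 2 + y ^ 2 ≠ 0)
    (hy : y ≠ 0) (h3 : 3 * x ^ 2 ≠ y ^ 2)
    (α : ℝ) (hα : α = (-(((μ : ℂ) + Complex.I * ν)) / ((y : ℂ) + Complex.I * x) ^ 3).re)
    (l : ℝ) (hl : l = x / y)
    (usq : ℝ) (husq : usq = dotProduct ((kerrNUTMetric x y X Y)⁻¹.mulVec (kerrNUTu x y X Y)) (kerrNUTu x y X Y))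
    (σ : ℝ) (hσ : σ = 2 * α / (3 * l ^ 2 - 1) - y ^ 2 * usq / 4) :
    usq = 4 * (X - Y) / (x ^ 2 + y ^ 2) ^ 3 ∧
      (ν = 0 → σ = ε * y ^ 2 / (x ^ 2 + y ^ 2) ^ 2) := by
  have husq' : usq = 4 * (X - Y) / (x ^ 2 + y ^ 2) ^ 3 :=
    husq.trans (kerrNUTu_normSq hXpos.ne' hY0 (by rwa [add_comm]))
  refine ⟨husq', fun hν => ?_⟩
  subst hν
  have hXY : X - Y = -ε * (x ^ 2 + y ^ 2) + 2 * μ * y := by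
    rw [hX, hY]
    ring
  have hα' : α = -(μ * (y ^ 3 - 3 * y * x ^ 2)) / (y ^ 2 + x ^ 2) ^ 3 := by
    rw [hα, re_neg_div_add_I_mul_pow_three]
    ring
  have h2α : 2 * α / (3 * l ^ 2 - 1) = 2 * μ * y ^ 3 / (y ^ 2 + x ^ 2) ^ 3 :=
    calc 2 * α / (3 * l ^ 2 - 1)
        = -2 * μ / (y ^ 2 + x ^ 2) ^ 3 * ((y ^ 3 - 3 * y * x ^ 2) / (3 * (x / y) ^ 2 - 1)) := by
          rw [hα', hl]
          ring
      _ = 2 * μ * y ^ 3 / (y ^ 2 + x ^ 2) ^ 3 := by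
          rw [pow_three_sub_div_three_mul_div_sq_sub_one hy h3]
          ring
  rw [hσ, h2α, husq', hXY]
  field_simp
  ring

theorem stmt18 (t y x z ε ν γ μ : ℝ) (X Y : ℝ)
    (hX : X = -ε * x ^ 2 + 2 * ν * x + γ) (hY : Y = ε * y ^ 2 - 2 * μ * y + γ)
    (hXpos : X > 0) (hY0 : Y ≠ 0) (hΔ : x ^ 2 + y ^ 2 ≠ 0)
    (hy : y ≠ 0) (h3 : 3 * x ^ 2 ≠ y ^ 2)
    (α : ℝ) (hα : α = (-(((μ : ℂ) + Complex.I * ν)) / ((y : ℂ) + Complex.I * x) ^ 3).re)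
    (l : ℝ) (hl : l = x / y)
    (usq : ℝ) (husq : usq = dotProduct ((kerrNUTMetric x y X Y)⁻¹.mulVec (kerrNUTu x y X Y)) (kerrNUTu x y X Y))
    (σ : ℝ) (hσ : σ = 2 * α / (3 * l ^ 2 - 1) - y ^ 2 * usq / 4) :
    usq = 4 * (X - Y) / (x ^ 2 + y ^ 2) ^ 3 ∧
      (ν = 0 → σ = ε * y ^ 2 / (x ^ 2 + y ^ 2) ^ 2) :=
  stmt18_general y x ε ν γ μ X Y hX hY hXpos hY0 hΔ hy h3 α hα l hl usq husq σ hσ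
end
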